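/- Riemann-sum approximation: let h > 0 and f(x) = e^{hx}/x. For fixed 0 < t₀ < t, the sums S(ε) := ∑_{i=⌊t₀/2ε⌋}^{⌊t/2ε⌋} 2ε·f((2i+1)ε) satisfy: there is K > 0 such that for all sufficiently small ε > 0 there exists T₀ such that for all t > T₀, |ln(S(ε)/∫_{t₀}^{t} f(x)dx)| < Kε. -/

import Mathlib

/-
Write `f x = e^{hx} / x`. On `[t₀/2, ∞)` the logarithm of `f` is Lipschitz with constant
`L = h + 2/t₀`, so on each grid cell `[2iε, 2(i+1)ε]` the values of `f` lie within a factor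
`e^{Lε}` of its value at the midpoint, and `S(ε)` is within that factor of `∫_a^b f`, where
`[a, b]` is the union of the cells, with `t₀ - 2ε < a ≤ t₀` and `t < b ≤ t + 2ε`.
The overshoot `∫_a^{t₀} f` does not depend on `t`, while `∫_{t₀}^t f ≥ h (t - t₀)`
diverges, and the log-Lipschitz bound again gives `∫_t^b f ≤ 2ε e^{L(1+2ε)} ∫_{t-1}^t f`.
Hence both boundary pieces cost a relative error `O(ε)` once `t` is large.
-/

open Filter Real Set Finset intervalIntegral

/-- For positive `g`, this says that `log ∘ g` is `L`-Lipschitz on `s`. -/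
def LogLipschitzOn (L : ℝ) (g : ℝ → ℝ) (s : Set ℝ) : Prop :=
  ∀ x ∈ s, ∀ y ∈ s, g x ≤ exp (L * |x - y|) * g y

noncomputable def midpointSum (g : ℝ → ℝ) (t₀ t ε : ℝ) : ℝ :=
  ∑ i ∈ Icc ⌊t₀ / (2 * ε)⌋₊ ⌊t / (2 * ε)⌋₊, 2 * ε * g ((2 * i + 1) * ε)

noncomputable def gridFloor (ε x : ℝ) : ℝ := 2 * ε * ⌊x / (2 * ε)⌋₊

theorem gridFloor_le {ε x : ℝ} (hε : 0 < ε) (hx : 0 ≤ x) : gridFloor ε x ≤ x := by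
  have := Nat.floor_le (div_nonneg hx (by positivity : (0 : ℝ) ≤ 2 * ε))
  rwa [le_div_iff₀ (by positivity), mul_comm] at this

theorem lt_gridFloor_add {ε x : ℝ} (hε : 0 < ε) : x < gridFloor ε x + 2 * ε := by
  have := Nat.lt_floor_add_one (x / (2 * ε))
  rw [div_lt_iff₀ (by positivity)] at this
  rw [gridFloor]; linarith

theorem abs_log_div_le {x y c : ℝ} (hy : 0 < y) (hxy : x ≤ exp c * y) (hyx : y ≤ exp c * x) :
    |log (x / y)| ≤ c := by
  have hx : 0 < x := pos_of_mul_pos_right (hy.trans_le hyx) (exp_pos c).le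
  rw [abs_le, le_log_iff_exp_le (div_pos hx hy), log_le_iff_le_exp (div_pos hx hy),
    le_div_iff₀ hy, div_le_iff₀ hy, exp_neg, inv_mul_le_iff₀ (exp_pos c)]
  exact ⟨hyx, hxy⟩

section LogLipschitzOn

variable {g : ℝ → ℝ} {s : Set ℝ} {L : ℝ}

theorem LogLipschitzOn.le_exp_mul {x y r : ℝ} (hg : LogLipschitzOn L g s) (hL : 0 ≤ L)
    (hx : x ∈ s) (hy : y ∈ s) (hgy : 0 ≤ g y) (hxy : |x - y| ≤ r) :
    g x ≤ exp (L * r) * g y :=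
  (hg x hx y hy).trans (by gcongr)

theorem LogLipschitzOn.integral_cell_bounds {c ε : ℝ} (hg : LogLipschitzOn L g s) (hL : 0 ≤ L)
    (hg0 : ∀ x ∈ s, 0 ≤ g x) (hcont : ContinuousOn g s) (hε : 0 ≤ ε)
    (hs : Icc (c - ε) (c + ε) ⊆ s) :
    2 * ε * g c ≤ exp (L * ε) * ∫ x in (c - ε)..(c + ε), g x ∧
      ∫ x in (c - ε)..(c + ε), g x ≤ exp (L * ε) * (2 * ε * g c) := by
  have hcε : c - ε ≤ c + ε := by linarith
  have hc : c ∈ s := hs ⟨by linarith, by linarith⟩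
  have hint : IntervalIntegrable g MeasureTheory.volume (c - ε) (c + ε) :=
    (hcont.mono hs).intervalIntegrable_of_Icc hcε
  have hdist : ∀ x ∈ Icc (c - ε) (c + ε), |x - c| ≤ ε := fun x hx =>
    abs_sub_le_iff.2 ⟨by linarith [hx.2], by linarith [hx.1]⟩
  have hconst : ∫ _ in (c - ε)..(c + ε), g c = 2 * ε * g c := by
    rw [integral_const, smul_eq_mul]; ring
  constructor
  · calc 2 * ε * g c = ∫ _ in (c - ε)..(c + ε), g c := hconst.symm
      _ ≤ ∫ x in (c - ε)..(c + ε), exp (L * ε) * g x :=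
          integral_mono_on hcε intervalIntegrable_const (hint.const_mul _) fun x hx =>
            hg.le_exp_mul hL hc (hs hx) (hg0 x (hs hx)) (by rw [abs_sub_comm]; exact hdist x hx)
      _ = exp (L * ε) * ∫ x in (c - ε)..(c + ε), g x := integral_const_mul _ _
  · calc ∫ x in (c - ε)..(c + ε), g x ≤ ∫ _ in (c - ε)..(c + ε), exp (L * ε) * g c :=
          integral_mono_on hcε hint intervalIntegrable_const fun x hx =>
            hg.le_exp_mul hL (hs hx) hc (hg0 c hc) (hdist x hx)
      _ = exp (L * ε) * (2 * ε * g c) := by rw [integral_const_mul, hconst]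

theorem LogLipschitzOn.riemannSum_bounds {a ε : ℝ} {n : ℕ} (hg : LogLipschitzOn L g s)
    (hL : 0 ≤ L) (hg0 : ∀ x ∈ s, 0 ≤ g x) (hcont : ContinuousOn g s) (hε : 0 ≤ ε)
    (hs : Icc a (a + 2 * n * ε) ⊆ s) :
    ∑ k ∈ range n, 2 * ε * g (a + (2 * k + 1) * ε) ≤
        exp (L * ε) * ∫ x in a..(a + 2 * n * ε), g x ∧
      ∫ x in a..(a + 2 * n * ε), g x ≤
        exp (L * ε) * ∑ k ∈ range n, 2 * ε * g (a + (2 * k + 1) * ε) := by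
  set p : ℕ → ℝ := fun k => a + 2 * k * ε
  have hsub : ∀ k ∈ range n, Icc (p k) (p (k + 1)) ⊆ s := by
    intro k hk
    have hk : (k : ℝ) + 1 ≤ n := by exact_mod_cast mem_range.1 hk
    refine (Set.Icc_subset_Icc ?_ ?_).trans hs <;> simp only [p] <;> push_cast <;>
      nlinarith [(Nat.cast_nonneg k : (0 : ℝ) ≤ k)]
  have hcell : ∀ k ∈ range n, 2 * ε * g (a + (2 * k + 1) * ε) ≤
        exp (L * ε) * ∫ x in p k..p (k + 1), g x ∧
      ∫ x in p k..p (k + 1), g x ≤ exp (L * ε) * (2 * ε * g (a + (2 * k + 1) * ε)) := by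
    intro k hk
    have hp : p k = a + (2 * k + 1) * ε - ε ∧ p (k + 1) = a + (2 * k + 1) * ε + ε := by
      constructor <;> (simp only [p]; push_cast; ring)
    have := hsub k hk
    rw [hp.1, hp.2] at this ⊢
    exact hg.integral_cell_bounds hL hg0 hcont hε this
  have hsum : ∑ k ∈ range n, ∫ x in p k..p (k + 1), g x = ∫ x in a..(a + 2 * n * ε), g x := by
    rw [sum_integral_adjacent_intervals fun k hk =>
      (hcont.mono (hsub k (mem_range.2 hk))).intervalIntegrable_of_Icc
        (by simp only [p]; push_cast; nlinarith)]
    simp [p]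
  rw [← hsum, mul_sum, mul_sum]
  exact ⟨sum_le_sum fun k hk => (hcell k hk).1, sum_le_sum fun k hk => (hcell k hk).2⟩

theorem LogLipschitzOn.midpointSum_bounds {t₀ t ε : ℝ} (hg : LogLipschitzOn L g s)
    (hL : 0 ≤ L) (hg0 : ∀ x ∈ s, 0 ≤ g x) (hcont : ContinuousOn g s) (hε : 0 < ε) (ht : t₀ ≤ t)
    (hs : Icc (gridFloor ε t₀) (gridFloor ε t + 2 * ε) ⊆ s) :
    midpointSum g t₀ t ε ≤
        exp (L * ε) * ∫ x in gridFloor ε t₀..gridFloor ε t + 2 * ε, g x ∧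
      ∫ x in gridFloor ε t₀..gridFloor ε t + 2 * ε, g x ≤
        exp (L * ε) * midpointSum g t₀ t ε := by
  have hfloor : ⌊t₀ / (2 * ε)⌋₊ ≤ ⌊t / (2 * ε)⌋₊ + 1 :=
    (Nat.floor_mono (by gcongr)).trans (Nat.le_succ _)
  have hsum : midpointSum g t₀ t ε = ∑ k ∈ range (⌊t / (2 * ε)⌋₊ + 1 - ⌊t₀ / (2 * ε)⌋₊),
      2 * ε * g (gridFloor ε t₀ + (2 * k + 1) * ε) := by
    rw [midpointSum, ← Finset.Ico_add_one_right_eq_Icc, Finset.sum_Ico_eq_sum_range]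
    refine sum_congr rfl fun k _ => ?_
    rw [gridFloor]; push_cast; ring_nf
  have hend : gridFloor ε t₀ + 2 * ↑(⌊t / (2 * ε)⌋₊ + 1 - ⌊t₀ / (2 * ε)⌋₊) * ε =
      gridFloor ε t + 2 * ε := by
    rw [Nat.cast_sub hfloor, gridFloor, gridFloor]; push_cast; ring
  rw [← hend] at hs ⊢
  rw [hsum]
  exact hg.riemannSum_bounds hL hg0 hcont hε.le hs

theorem LogLipschitzOn.integral_le_mul_integral_sub_one {t b : ℝ} (hg : LogLipschitzOn L g s)
    (hL : 0 ≤ L) (hg0 : ∀ x ∈ s, 0 ≤ g x) (hcont : ContinuousOn g s) (htb : t ≤ b)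
    (hs : Icc (t - 1) b ⊆ s) :
    ∫ x in t..b, g x ≤ (b - t) * exp (L * (1 + (b - t))) * ∫ x in (t - 1)..t, g x := by
  have ht : t ∈ s := hs ⟨by linarith, htb⟩
  have hright : Icc t b ⊆ s := (Set.Icc_subset_Icc (by linarith) le_rfl).trans hs
  have hleft : Icc (t - 1) t ⊆ s := (Set.Icc_subset_Icc le_rfl htb).trans hs
  have hupper : ∫ x in t..b, g x ≤ (b - t) * (exp (L * (b - t)) * g t) := by
    rw [← smul_eq_mul, ← integral_const]
    refine integral_mono_on htb ((hcont.mono hright).intervalIntegrable_of_Icc htb)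
      intervalIntegrable_const fun x hx => hg.le_exp_mul hL (hright hx) ht (hg0 t ht) ?_
    rw [abs_of_nonneg (by linarith [hx.1])]; linarith [hx.2]
  have hlower : g t ≤ exp L * ∫ x in (t - 1)..t, g x := by
    rw [← integral_const_mul]
    calc g t = ∫ _ in (t - 1)..t, g t := by simp
      _ ≤ ∫ x in (t - 1)..t, exp L * g x :=
        integral_mono_on (by linarith) intervalIntegrable_const
          (((hcont.mono hleft).intervalIntegrable_of_Icc (by linarith)).const_mul _)
          fun x hx => by
            simpa using hg.le_exp_mul hL ht (hleft hx) (hg0 x (hleft hx))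
              (show |t - x| ≤ 1 by rw [abs_of_nonneg (by linarith [hx.2])]; linarith [hx.1])
  calc ∫ x in t..b, g x ≤ (b - t) * (exp (L * (b - t)) * g t) := hupper
    _ ≤ (b - t) * (exp (L * (b - t)) * (exp L * ∫ x in (t - 1)..t, g x)) := by
        gcongr
    _ = (b - t) * exp (L * (1 + (b - t))) * ∫ x in (t - 1)..t, g x := by
        rw [mul_add, mul_one, exp_add]; ring

theorem LogLipschitzOn.eventually_integral_le_exp_mul {m t₀ a ε D : ℝ}
    (hg : LogLipschitzOn L g (Ici m)) (hL : 0 ≤ L) (hg0 : ∀ x ∈ Ici m, 0 ≤ g x)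
    (hcont : ContinuousOn g (Ici m))
    (hdiv : Tendsto (fun t => ∫ x in t₀..t, g x) atTop atTop) (hma : m ≤ a) (hat₀ : a ≤ t₀)
    (hε : 0 < ε) (hεD : 2 * ε ≤ D) :
    ∀ᶠ t in atTop, ∀ b ∈ Icc t (t + 2 * ε),
      ∫ x in a..b, g x ≤ exp ((1 + 2 * exp (L * (1 + D))) * ε) * ∫ x in t₀..t, g x := by
  have hint : ∀ p q, m ≤ p → m ≤ q → IntervalIntegrable g MeasureTheory.volume p q :=
    fun p q hp hq => (hcont.mono fun x hx => le_trans (le_min hp hq) hx.1).intervalIntegrable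
  filter_upwards [hdiv.eventually_ge_atTop ((∫ x in a..t₀, g x) / ε),
    eventually_ge_atTop (t₀ + 1)] with t hIt ht b hb
  set I := ∫ x in t₀..t, g x
  have hsplit : ∫ x in a..b, g x = (∫ x in a..t₀, g x) + I + ∫ x in t..b, g x := by
    rw [integral_add_adjacent_intervals (hint a t₀ hma (by linarith))
        (hint t₀ t (by linarith) (by linarith)),
      integral_add_adjacent_intervals (hint a t hma (by linarith))
        (hint t b (by linarith) (by linarith [hb.1]))]
  have hleft : ∫ x in a..t₀, g x ≤ ε * I := by rwa [div_le_iff₀' hε] at hIt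
  have hlast : ∫ x in (t - 1)..t, g x ≤ I :=
    integral_mono_interval (by linarith) (by linarith) le_rfl
      (MeasureTheory.ae_restrict_of_forall_mem measurableSet_Ioc fun x hx =>
        hg0 x (show m ≤ x by linarith [hx.1]))
      (hint t₀ t (by linarith) (by linarith))
  have hI0 : 0 ≤ I :=
    integral_nonneg (by linarith) fun x hx => hg0 x (show m ≤ x by linarith [hx.1])
  have hright : ∫ x in t..b, g x ≤ 2 * ε * exp (L * (1 + D)) * I :=
    calc ∫ x in t..b, g x ≤ (b - t) * exp (L * (1 + (b - t))) * ∫ x in (t - 1)..t, g x :=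
          hg.integral_le_mul_integral_sub_one hL hg0 hcont hb.1
            fun x hx => show m ≤ x by linarith [hx.1]
      _ ≤ 2 * ε * exp (L * (1 + D)) * I := by
          have : b - t ≤ 2 * ε := by linarith [hb.2]
          have : 0 ≤ ∫ x in (t - 1)..t, g x :=
            integral_nonneg (by linarith) fun x hx => hg0 x (show m ≤ x by linarith [hx.1])
          gcongr
          linarith [hb.1]
  calc ∫ x in a..b, g x ≤ (1 + (1 + 2 * exp (L * (1 + D))) * ε) * I := by
        rw [hsplit]; linarith
    _ ≤ exp ((1 + 2 * exp (L * (1 + D))) * ε) * I := by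
        gcongr; linarith [add_one_le_exp ((1 + 2 * exp (L * (1 + D))) * ε)]

theorem LogLipschitzOn.exists_abs_log_midpointSum_div_integral_lt {m t₀ : ℝ}
    (hg : LogLipschitzOn L g (Ici m)) (hL : 0 ≤ L) (hg0 : ∀ x ∈ Ici m, 0 ≤ g x)
    (hcont : ContinuousOn g (Ici m)) (hdiv : Tendsto (fun t => ∫ x in t₀..t, g x) atTop atTop)
    (hm : m < t₀) (ht₀ : 0 ≤ t₀) :
    ∃ K > (0 : ℝ), ∃ ε₀ > (0 : ℝ), ∀ ε ∈ Ioo (0 : ℝ) ε₀, ∃ T₀ : ℝ, ∀ t > T₀,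
      |log (midpointSum g t₀ t ε / ∫ x in t₀..t, g x)| < K * ε := by
  set C := 1 + 2 * exp (L * (1 + (t₀ - m)))
  refine ⟨L + C + 1, by positivity, (t₀ - m) / 2, by linarith, fun ε ⟨hε, hεm⟩ => ?_⟩
  have ha := gridFloor_le hε ht₀
  have ha' := lt_gridFloor_add (x := t₀) hε
  obtain ⟨T₀, hT₀⟩ := eventually_atTop.1 <|
    (hg.eventually_integral_le_exp_mul hL hg0 hcont hdiv (by linarith) ha hε
      (D := t₀ - m) (by linarith)).and
      ((hdiv.eventually_gt_atTop 0).and (eventually_ge_atTop t₀))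
  refine ⟨T₀, fun t ht => ?_⟩
  obtain ⟨hJ, hI, ht₀t⟩ := hT₀ t ht.le
  have hb := gridFloor_le hε (ht₀.trans ht₀t)
  have hb' := lt_gridFloor_add (x := t) hε
  obtain ⟨hSJ, hJS⟩ := hg.midpointSum_bounds hL hg0 hcont hε ht₀t
    fun x hx => show m ≤ x by linarith [hx.1]
  have hIJ : ∫ x in t₀..t, g x ≤ ∫ x in gridFloor ε t₀..gridFloor ε t + 2 * ε, g x :=
    integral_mono_interval ha ht₀t hb'.le
      (MeasureTheory.ae_restrict_of_forall_mem measurableSet_Ioc fun x hx =>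
        hg0 x (show m ≤ x by linarith [hx.1]))
      ((hcont.mono fun x hx => show m ≤ x by linarith [hx.1]).intervalIntegrable_of_Icc
        (by linarith))
  have hexp : exp (L * ε) * exp (C * ε) = exp ((L + C) * ε) := by rw [← exp_add]; ring_nf
  refine (abs_log_div_le hI ?_ ?_).trans_lt
    (mul_lt_mul_of_pos_right (lt_add_one (L + C)) hε)
  · calc midpointSum g t₀ t ε ≤ exp (L * ε) * (exp (C * ε) * ∫ x in t₀..t, g x) :=
          hSJ.trans (by gcongr; exact hJ _ ⟨hb'.le, by linarith⟩)
      _ = exp ((L + C) * ε) * ∫ x in t₀..t, g x := by rw [← hexp]; ring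
  · have hS : 0 ≤ midpointSum g t₀ t ε :=
      nonneg_of_mul_nonneg_right (hI.le.trans (hIJ.trans hJS)) (exp_pos _)
    calc ∫ x in t₀..t, g x ≤ exp (L * ε) * midpointSum g t₀ t ε := hIJ.trans hJS
      _ ≤ exp ((L + C) * ε) * midpointSum g t₀ t ε := by
          gcongr
          nlinarith [exp_pos (2 * ε), exp_pos (L * (1 + (t₀ - m)))]

end LogLipschitzOn

theorem logLipschitzOn_exp_mul_div (h : ℝ) {m : ℝ} (hm : 0 < m) :
    LogLipschitzOn (|h| + 1 / m) (fun x => exp (h * x) / x) (Ici m) := by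
  intro x hx y hy
  have hx0 : 0 < x := hm.trans_le hx
  have hy0 : 0 < y := hm.trans_le hy
  have hexp : exp (h * x) ≤ exp (|h| * |x - y|) * exp (h * y) := by
    rw [← exp_add, ← abs_mul]
    gcongr
    linarith [le_abs_self (h * (x - y))]
  have hinv : y ≤ x * exp (|x - y| / m) := by
    have : |x - y| ≤ x * (|x - y| / m) := by
      rw [mul_div_assoc', le_div_iff₀ hm, mul_comm]
      exact mul_le_mul_of_nonneg_right (mem_Ici.1 hx) (abs_nonneg _)
    nlinarith [add_one_le_exp (|x - y| / m), neg_abs_le (x - y)]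
  calc exp (h * x) / x ≤ exp (|h| * |x - y|) * exp (h * y) / x := by gcongr
    _ ≤ exp (|h| * |x - y|) * exp (h * y) * exp (|x - y| / m) / y := by
        rw [div_le_div_iff₀ hx0 hy0]
        linarith [mul_le_mul_of_nonneg_left hinv
          (by positivity : 0 ≤ exp (|h| * |x - y|) * exp (h * y))]
    _ = exp ((|h| + 1 / m) * |x - y|) * (exp (h * y) / y) := by
        rw [add_mul, exp_add]; ring_nf

theorem continuousOn_exp_mul_div (h : ℝ) {m : ℝ} (hm : 0 < m) :
    ContinuousOn (fun x => exp (h * x) / x) (Ici m) :=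
  ContinuousOn.div (by fun_prop) continuousOn_id fun x hx => (hm.trans_le hx).ne'

theorem tendsto_integral_exp_mul_div_atTop {h t₀ : ℝ} (hh : 0 < h) (ht₀ : 0 < t₀) :
    Tendsto (fun t => ∫ x in t₀..t, exp (h * x) / x) atTop atTop := by
  refine tendsto_atTop_mono' _ ?_
    ((tendsto_atTop_add_const_right _ (-t₀) tendsto_id).const_mul_atTop hh)
  filter_upwards [eventually_ge_atTop t₀] with t ht
  calc h * (id t + -t₀) = ∫ _ in t₀..t, h := by simp; ring
    _ ≤ ∫ x in t₀..t, exp (h * x) / x :=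
      integral_mono_on ht intervalIntegrable_const
        (((continuousOn_exp_mul_div h ht₀).mono Icc_subset_Ici_self).intervalIntegrable_of_Icc
          ht)
        fun x hx => by
          rw [le_div_iff₀ (ht₀.trans_le hx.1)]
          linarith [add_one_le_exp (h * x)]

/-- Riemann-sum approximation for `f(x) = e^{hx}/x`: the midpoint-type Riemann sum
`S(ε) = ∑_{i=⌊t₀/2ε⌋}^{⌊t/2ε⌋} 2ε f((2i+1)ε)` over `[t₀, t]` agrees with
`∫_{t₀}^t f` up to multiplicative error `e^{Kε}`, uniformly in large `t`. -/
theorem riemann_sum_approximation (h t₀ : ℝ) (hh : 0 < h) (ht₀ : 0 < t₀) :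
    ∃ K > (0:ℝ), ∃ ε₀ > (0:ℝ), ∀ ε ∈ Set.Ioo (0:ℝ) ε₀, ∃ T₀ : ℝ, ∀ t > T₀,
      |Real.log
        ((∑ i ∈ Finset.Icc (Nat.floor (t₀ / (2 * ε))) (Nat.floor (t / (2 * ε))),
            2 * ε * (Real.exp (h * ((2 * (i : ℝ) + 1) * ε)) / ((2 * (i : ℝ) + 1) * ε))) /
          (∫ x in t₀..t, Real.exp (h * x) / x))| < K * ε := by
  have hm : 0 < t₀ / 2 := by positivity
  exact (logLipschitzOn_exp_mul_div h hm).exists_abs_log_midpointSum_div_integral_lt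
    (by positivity) (fun x hx => (div_pos (exp_pos _) (hm.trans_le hx)).le)
    (continuousOn_exp_mul_div h hm) (tendsto_integral_exp_mul_div_atTop hh ht₀) (by linarith)
    ht₀.le
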